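/- (Narrow convergence of the proper component to δ₀ as λ → ∞ with ε fixed.) Fix σ > 0 and ε > 0, and let (λ_n) be positive reals with λ_n → +∞. Then for every c > 0, (∫_{|β| > c} (exp{(λ_n/(2σ²))·ε²/(β² + ε²)} − 1) dβ) / (∫_ℝ (exp{(λ_n/(2σ²))·ε²/(β² + ε²)} − 1) dβ) → 0 as n → ∞; consequently the normalized proper component of the SIC prior converges narrowly to the Dirac measure at 0. -/

import Mathlib

/-!
Write `a = λ / (2σ²)` and `h β = ε² / (β² + ε²)`, so the integrand is `exp (a h) - 1`, with `h`
integrable and decreasing in `|β|`. Where `|β| > c` we have `h ≤ r := h c`, hence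
`exp (a h) - 1 ≤ a e^{a r} h`, and the numerator is `O(a e^{a r})`. On `[-c/2, c/2]` we have
`h ≥ s := h (c/2) > r`, so the denominator is at least `c (e^{a s} - 1)`. The ratio is thus
`O(a e^{-(s - r) a})`, which tends to `0` as `a → ∞`.
-/

open Filter MeasureTheory Real Topology
open scoped ENNReal

lemma Real.exp_sub_one_le_mul_exp (x : ℝ) : exp x - 1 ≤ x * exp x := by
  have h := mul_le_mul_of_nonneg_right (one_sub_le_exp_neg x) (exp_pos x).le
  rw [← exp_add, neg_add_cancel, exp_zero, sub_mul, one_mul] at h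
  linarith

lemma Real.exp_mul_sub_one_nonneg {a x : ℝ} (ha : 0 ≤ a) (hx : 0 ≤ x) : 0 ≤ exp (a * x) - 1 :=
  sub_nonneg.2 (one_le_exp (mul_nonneg ha hx))

lemma Real.exp_mul_sub_one_le {a x r : ℝ} (ha : 0 ≤ a) (hx : 0 ≤ x) (hxr : x ≤ r) :
    exp (a * x) - 1 ≤ a * exp (a * r) * x :=
  calc exp (a * x) - 1 ≤ a * x * exp (a * x) := exp_sub_one_le_mul_exp _
    _ ≤ a * x * exp (a * r) := by gcongr
    _ = a * exp (a * r) * x := by ring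

lemma Real.tendsto_mul_exp_div_exp_sub_one {r s : ℝ} (hrs : r < s) (hs : 0 < s) :
    Tendsto (fun a => a * exp (a * r) / (exp (a * s) - 1)) atTop (𝓝 0) := by
  have hnum : Tendsto (fun a : ℝ => a * exp (-(s - r) * a)) atTop (𝓝 0) := by
    simpa using tendsto_rpow_mul_exp_neg_mul_atTop_nhds_zero 1 (s - r) (sub_pos.2 hrs)
  have hden : Tendsto (fun a : ℝ => 1 - exp (-s * a)) atTop (𝓝 1) := by
    simpa using (tendsto_exp_atBot.comp
      (tendsto_id.const_mul_atTop_of_neg (neg_neg_of_pos hs))).const_sub 1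
  have hquot := hnum.div hden one_ne_zero
  rw [zero_div] at hquot
  refine hquot.congr fun a => ?_
  rw [Pi.div_apply, ← mul_div_mul_right _ _ (exp_pos (a * s)).ne']
  congr 1
  · rw [mul_assoc, ← exp_add]; ring_nf
  · rw [sub_mul, one_mul, ← exp_add, show -s * a + a * s = 0 by ring, exp_zero]

section ExpTilting

variable {α : Type*} [MeasurableSpace α] {μ : Measure α} {h : α → ℝ} {a M : ℝ}

lemma integrable_exp_mul_sub_one (hh : Integrable h μ) (h0 : 0 ≤ h) (hM : ∀ x, h x ≤ M)
    (ha : 0 ≤ a) : Integrable (fun x => exp (a * h x) - 1) μ :=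
  (hh.const_mul (a * exp (a * M))).mono'
    ((continuous_exp.comp_aestronglyMeasurable (hh.aestronglyMeasurable.const_mul a)).sub
      aestronglyMeasurable_const)
    (ae_of_all _ fun x => by
      rw [norm_of_nonneg (exp_mul_sub_one_nonneg ha (h0 x))]
      exact exp_mul_sub_one_le ha (h0 x) (hM x))

lemma setIntegral_exp_mul_sub_one_le (hh : Integrable h μ) (h0 : 0 ≤ h) (hM : ∀ x, h x ≤ M)
    (ha : 0 ≤ a) {S : Set α} {r : ℝ} (hS : MeasurableSet S) (hr : ∀ x ∈ S, h x ≤ r) :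
    ∫ x in S, exp (a * h x) - 1 ∂μ ≤ a * exp (a * r) * ∫ x, h x ∂μ :=
  calc ∫ x in S, exp (a * h x) - 1 ∂μ ≤ ∫ x in S, a * exp (a * r) * h x ∂μ :=
        setIntegral_mono_on (integrable_exp_mul_sub_one hh h0 hM ha).integrableOn
          (hh.const_mul _).integrableOn hS fun x hx => exp_mul_sub_one_le ha (h0 x) (hr x hx)
    _ = a * exp (a * r) * ∫ x in S, h x ∂μ := integral_const_mul _ _
    _ ≤ a * exp (a * r) * ∫ x, h x ∂μ :=
        mul_le_mul_of_nonneg_left (setIntegral_le_integral hh (ae_of_all _ h0)) (by positivity)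

lemma measureReal_mul_exp_mul_sub_one_le_integral (hh : Integrable h μ) (h0 : 0 ≤ h)
    (hM : ∀ x, h x ≤ M) (ha : 0 ≤ a) {T : Set α} {s : ℝ} (hT : MeasurableSet T)
    (hTfin : μ T ≠ ∞) (hs : ∀ x ∈ T, s ≤ h x) :
    μ.real T * (exp (a * s) - 1) ≤ ∫ x, exp (a * h x) - 1 ∂μ := by
  have hint := integrable_exp_mul_sub_one hh h0 hM ha
  calc μ.real T * (exp (a * s) - 1) = ∫ _ in T, exp (a * s) - 1 ∂μ := by
        rw [setIntegral_const, smul_eq_mul]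
    _ ≤ ∫ x in T, exp (a * h x) - 1 ∂μ :=
        setIntegral_mono_on (integrableOn_const hTfin) hint.integrableOn hT fun x hx => by
          gcongr
          exact hs x hx
    _ ≤ ∫ x, exp (a * h x) - 1 ∂μ :=
        setIntegral_le_integral hint (ae_of_all _ fun x => exp_mul_sub_one_nonneg ha (h0 x))

theorem tendsto_setIntegral_div_integral_exp_mul_sub_one (hh : Integrable h μ) (h0 : 0 ≤ h)
    (hM : ∀ x, h x ≤ M) {S T : Set α} {r s : ℝ} (hS : MeasurableSet S) (hT : MeasurableSet T)
    (hT0 : μ T ≠ 0) (hTfin : μ T ≠ ∞) (hr : ∀ x ∈ S, h x ≤ r) (hs : ∀ x ∈ T, s ≤ h x)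
    (hrs : r < s) (hs0 : 0 < s) :
    Tendsto (fun a => (∫ x in S, exp (a * h x) - 1 ∂μ) / ∫ x, exp (a * h x) - 1 ∂μ)
      atTop (𝓝 0) := by
  have hTpos : 0 < μ.real T := ENNReal.toReal_pos hT0 hTfin
  have hbound := (tendsto_mul_exp_div_exp_sub_one hrs hs0).const_mul
    ((∫ x, h x ∂μ) / μ.real T)
  rw [mul_zero] at hbound
  refine squeeze_zero' ?_ ?_ hbound
  · filter_upwards [eventually_ge_atTop 0] with a ha
    have hf : 0 ≤ fun x => exp (a * h x) - 1 := fun x => exp_mul_sub_one_nonneg ha (h0 x)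
    exact div_nonneg (integral_nonneg hf) (integral_nonneg hf)
  · filter_upwards [eventually_gt_atTop 0] with a ha
    have hden : 0 < μ.real T * (exp (a * s) - 1) :=
      mul_pos hTpos (sub_pos.2 (one_lt_exp_iff.2 (mul_pos ha hs0)))
    calc (∫ x in S, exp (a * h x) - 1 ∂μ) / ∫ x, exp (a * h x) - 1 ∂μ
        ≤ (a * exp (a * r) * ∫ x, h x ∂μ) / (μ.real T * (exp (a * s) - 1)) :=
          div_le_div₀ (mul_nonneg (by positivity) (integral_nonneg h0))
            (setIntegral_exp_mul_sub_one_le hh h0 hM ha.le hS hr) hden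
            (measureReal_mul_exp_mul_sub_one_le_integral hh h0 hM ha.le hT hTfin hs)
      _ = (∫ x, h x ∂μ) / μ.real T * (a * exp (a * r) / (exp (a * s) - 1)) := by
          rw [mul_comm _ (∫ x, h x ∂μ), mul_div_mul_comm]

end ExpTilting

section CauchyProfile

variable {ε : ℝ}

lemma integrable_sq_div_sq_add_sq (hε : ε ≠ 0) :
    Integrable (fun β : ℝ => ε ^ 2 / (β ^ 2 + ε ^ 2)) :=
  (integrable_inv_one_add_sq.comp_div hε).congr (ae_of_all _ fun β => by field_simp; ring)

lemma sq_div_sq_add_sq_le_one (β : ℝ) : ε ^ 2 / (β ^ 2 + ε ^ 2) ≤ 1 :=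
  div_le_one_of_le₀ (le_add_of_nonneg_left (sq_nonneg β)) (by positivity)

lemma sq_div_sq_add_sq_le_of_abs_le (hε : ε ≠ 0) {b c : ℝ} (hbc : |b| ≤ |c|) :
    ε ^ 2 / (c ^ 2 + ε ^ 2) ≤ ε ^ 2 / (b ^ 2 + ε ^ 2) := by
  have := sq_le_sq.2 hbc
  gcongr

lemma sq_div_sq_add_sq_lt_of_abs_lt (hε : ε ≠ 0) {b c : ℝ} (hbc : |b| < |c|) :
    ε ^ 2 / (c ^ 2 + ε ^ 2) < ε ^ 2 / (b ^ 2 + ε ^ 2) := by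
  have := sq_lt_sq.2 hbc
  gcongr

end CauchyProfile

theorem sic_proper_component_concentration_lambda_general (σ ε : ℝ) (hσ : 0 < σ) (hε : 0 < ε)
    (lam : ℕ → ℝ)
    (hlam : Tendsto lam atTop atTop)
    (c : ℝ) (hc : 0 < c) :
    Tendsto (fun n =>
        (∫ β in {b : ℝ | c < |b|},
            (Real.exp (lam n / (2 * σ ^ 2) * (ε ^ 2 / (β ^ 2 + ε ^ 2))) - 1)) /
          ∫ β : ℝ, (Real.exp (lam n / (2 * σ ^ 2) * (ε ^ 2 / (β ^ 2 + ε ^ 2))) - 1))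
      atTop (nhds 0) := by
  have hε₀ := hε.ne'
  have hS : MeasurableSet {b : ℝ | c < |b|} := measurableSet_lt measurable_const measurable_abs
  have hT0 : volume (Set.Icc (-(c / 2)) (c / 2)) ≠ 0 := by simp [hc]
  have hr : ∀ β ∈ {b : ℝ | c < |b|}, ε ^ 2 / (β ^ 2 + ε ^ 2) ≤ ε ^ 2 / (c ^ 2 + ε ^ 2) :=
    fun β hβ => sq_div_sq_add_sq_le_of_abs_le hε₀ ((abs_of_pos hc).trans_le hβ.le)
  have hs : ∀ β ∈ Set.Icc (-(c / 2)) (c / 2),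
      ε ^ 2 / ((c / 2) ^ 2 + ε ^ 2) ≤ ε ^ 2 / (β ^ 2 + ε ^ 2) :=
    fun β hβ => sq_div_sq_add_sq_le_of_abs_le hε₀ ((abs_le.2 hβ).trans (le_abs_self _))
  have hrs : ε ^ 2 / (c ^ 2 + ε ^ 2) < ε ^ 2 / ((c / 2) ^ 2 + ε ^ 2) :=
    sq_div_sq_add_sq_lt_of_abs_lt hε₀ (by rw [abs_of_pos hc, abs_of_pos (half_pos hc)]; linarith)
  exact (tendsto_setIntegral_div_integral_exp_mul_sub_one (integrable_sq_div_sq_add_sq hε₀)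
    (fun β => by positivity) sq_div_sq_add_sq_le_one hS measurableSet_Icc hT0 (by simp) hr hs
    hrs (by positivity)).comp (hlam.atTop_div_const (by positivity))

/-- **Narrow convergence of the proper component to `δ₀` as `λ → ∞` with `ε`
fixed.** With `σ, ε > 0` fixed and `λ_n → ∞`, for every `c > 0` the normalized
mass of the proper component outside `[−c, c]` vanishes. -/
theorem sic_proper_component_concentration_lambda (σ ε : ℝ) (hσ : 0 < σ) (hε : 0 < ε)
    (lam : ℕ → ℝ) (hlam_pos : ∀ n, 0 < lam n)
    (hlam : Tendsto lam atTop atTop)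
    (c : ℝ) (hc : 0 < c) :
    Tendsto (fun n =>
        (∫ β in {b : ℝ | c < |b|},
            (Real.exp (lam n / (2 * σ ^ 2) * (ε ^ 2 / (β ^ 2 + ε ^ 2))) - 1)) /
          ∫ β : ℝ, (Real.exp (lam n / (2 * σ ^ 2) * (ε ^ 2 / (β ^ 2 + ε ^ 2))) - 1))
      atTop (nhds 0) :=
  sic_proper_component_concentration_lambda_general σ ε hσ hε lam hlam c hc
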